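/- (Rankine–Hugoniot velocity of a single shock.) Let δ ≠ 0 and 𝔞̂ be real with g(y) = 𝔞̂·(e^{δy} − 1) > 0 for all y ≥ 1 (g(0) = 0), and let σ, θ be real with θ = σ + δ and Z(σ), Z(θ) < ∞. Define the density ρ(τ) := Σ_{z=0}^∞ z·μ^τ(z) and the mean jump rate h(τ) := Σ_{z=0}^∞ g(z)·μ^τ(z). Then ρ(σ) ≠ ρ(θ) and the Rankine–Hugoniot velocity equals the shock random walk rate: (h(σ) − h(θ))/(ρ(σ) − ρ(θ)) = (e^{δ} − 1)·(e^σ + 𝔞̂). -/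

import Mathlib

/-! With `w_τ(z) = e^{τz}/g(z)!` one has `g(z+1) w_τ(z+1) = e^τ w_τ(z)` for every rate `g`,
which gives `h(τ) = e^τ`. For `g(y) = 𝔞(e^{δy} - 1)` we have `e^{δ(z+1)} = 1 + g(z+1)/𝔞`, hence,
with `q = e^σ/𝔞`,
  `w_{σ+δ}(z+1) = w_σ(z+1) + q w_σ(z)`.
Summing this identity, and `z` times it, gives `Z(θ) = (1+q) Z(σ)`, so `1 + q > 0`, and
`Σ z w_θ(z) = (1+q) Σ z w_σ(z) + q Z(σ)`, so `ρ(θ) = ρ(σ) + q/(1+q)`.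
The first moment `Σ z w_σ(z)` converges by the ratio test: `w_σ(z+1)/w_σ(z) = q/(e^{δ(z+1)} - 1)`
tends to `0` if `δ > 0` and to `-q < 1` if `δ < 0`.
-/

open Real

noncomputable def gfact (g : ℕ → ℝ) (z : ℕ) : ℝ := ∏ y ∈ Finset.Icc 1 z, g y

noncomputable def ZN (g : ℕ → ℝ) (θ : ℝ) : ℝ := ∑' z : ℕ, exp (θ * z) / gfact g z

noncomputable def muN (g : ℕ → ℝ) (θ : ℝ) (z : ℕ) : ℝ := exp (θ * z) / (gfact g z * ZN g θ)

open Filter Topology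

theorem HasSum.of_succ_eq_add {G : Type*} [AddCommGroup G] [TopologicalSpace G]
    [IsTopologicalAddGroup G] {a b c : ℕ → G} {A C : G} (ha : HasSum a A) (hc : HasSum c C)
    (h0 : b 0 = a 0) (hsucc : ∀ n, b (n + 1) = a (n + 1) + c n) : HasSum b (A + C) := by
  rw [← hasSum_nat_add_iff' 1]
  have := ((hasSum_nat_add_iff' 1).mpr ha).add hc
  simp only [Finset.range_one, Finset.sum_singleton] at this ⊢
  rw [h0, add_sub_right_comm]
  exact this.congr_fun fun n => hsucc n

theorem summable_nat_mul_of_ratio_tendsto {f : ℕ → ℝ} {l : ℝ} (hl : l < 1) (hf : ∀ n, 0 < f n)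
    (h : Tendsto (fun n => f (n + 1) / f n) atTop (𝓝 l)) :
    Summable fun n : ℕ => (n : ℝ) * f n := by
  refine summable_of_ratio_test_tendsto_lt_one hl ?_ ?_
  · filter_upwards [eventually_ge_atTop 1] with n hn
    exact mul_ne_zero (Nat.cast_ne_zero.mpr (by omega)) (hf n).ne'
  · have hfactor : Tendsto (fun n : ℕ => 1 + (n : ℝ)⁻¹) atTop (𝓝 1) := by
      simpa using (tendsto_const_nhds (x := (1 : ℝ))).add tendsto_inv_atTop_nhds_zero_nat
    refine (one_mul l ▸ hfactor.mul h).congr' ?_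
    filter_upwards [eventually_ge_atTop 1] with n hn
    have hn' : (n : ℝ) ≠ 0 := Nat.cast_ne_zero.mpr (by omega)
    rw [norm_mul, norm_mul, Real.norm_of_nonneg (hf n).le, Real.norm_of_nonneg (hf _).le,
      Real.norm_natCast, Real.norm_natCast]
    field_simp [(hf n).ne']
    push_cast
    ring

section Rate

variable {g : ℕ → ℝ}

theorem gfact_zero (g : ℕ → ℝ) : gfact g 0 = 1 := by
  simp [gfact]

theorem gfact_succ (g : ℕ → ℝ) (n : ℕ) : gfact g (n + 1) = gfact g n * g (n + 1) :=
  Finset.prod_Icc_succ_top (Nat.le_add_left 1 n) g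

theorem gfact_pos (hg : ∀ y, 1 ≤ y → 0 < g y) (n : ℕ) : 0 < gfact g n :=
  Finset.prod_pos fun y hy => hg y (Finset.mem_Icc.mp hy).1

noncomputable def weight (g : ℕ → ℝ) (τ : ℝ) (z : ℕ) : ℝ := exp (τ * z) / gfact g z

theorem weight_zero (g : ℕ → ℝ) (τ : ℝ) : weight g τ 0 = 1 := by
  simp [weight, gfact_zero]

theorem weight_pos (hg : ∀ y, 1 ≤ y → 0 < g y) (τ : ℝ) (n : ℕ) : 0 < weight g τ n :=
  div_pos (exp_pos _) (gfact_pos hg n)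

theorem rate_mul_weight_succ {n : ℕ} (hn : g (n + 1) ≠ 0) (τ : ℝ) :
    g (n + 1) * weight g τ (n + 1) = exp τ * weight g τ n := by
  rw [weight, weight, gfact_succ, Nat.cast_succ, mul_add_one, exp_add]
  field_simp

theorem ZN_pos (hg : ∀ y, 1 ≤ y → 0 < g y) {τ : ℝ} (hZ : Summable (weight g τ)) :
    0 < ZN g τ :=
  hZ.tsum_pos (fun n => (weight_pos hg τ n).le) 0 (weight_pos hg τ 0)

theorem tsum_mul_muN (f : ℕ → ℝ) (τ : ℝ) :
    ∑' z, f z * muN g τ z = (∑' z, f z * weight g τ z) / ZN g τ := by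
  rw [← tsum_div_const]
  exact tsum_congr fun z => by rw [muN, weight, ← div_div, mul_div_assoc]

theorem tsum_rate_mul_muN (hg0 : g 0 = 0) (hg : ∀ y, 1 ≤ y → 0 < g y) {τ : ℝ}
    (hZ : Summable (weight g τ)) : ∑' z, g z * muN g τ z = exp τ := by
  have hsum : HasSum (fun z => g z * weight g τ z) (0 + exp τ * ZN g τ) :=
    hasSum_zero.of_succ_eq_add (hZ.hasSum.mul_left (exp τ)) (by simp [hg0])
      fun n => by rw [zero_add, rate_mul_weight_succ (hg (n + 1) le_add_self).ne']
  rw [tsum_mul_muN, hsum.tsum_eq, zero_add, mul_div_cancel_right₀ _ (ZN_pos hg hZ).ne']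

end Rate

section ExponentialRate

variable {𝔞 δ : ℝ} {g : ℕ → ℝ} (hg : ∀ y : ℕ, g y = 𝔞 * (exp (δ * y) - 1))
  (hgpos : ∀ y : ℕ, 1 ≤ y → 0 < g y)
include hg hgpos

theorem ne_zero_of_exponential_rate : 𝔞 ≠ 0 ∧ δ ≠ 0 := by
  have h1 := hgpos 1 le_rfl
  rw [hg 1] at h1
  constructor <;> rintro rfl <;> simp at h1

theorem weight_add_succ (σ : ℝ) (n : ℕ) :
    weight g (σ + δ) (n + 1) = weight g σ (n + 1) + exp σ / 𝔞 * weight g σ n := by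
  have h𝔞 := (ne_zero_of_exponential_rate hg hgpos).1
  have hexp : exp (δ * (n + 1 : ℕ)) = 1 + g (n + 1) / 𝔞 := by
    rw [hg]; field_simp; ring
  have hstep := rate_mul_weight_succ (hgpos (n + 1) le_add_self).ne' σ
  calc weight g (σ + δ) (n + 1) = exp (δ * (n + 1 : ℕ)) * weight g σ (n + 1) := by
        rw [weight, weight, add_mul, exp_add]; ring
    _ = weight g σ (n + 1) + (g (n + 1) * weight g σ (n + 1)) / 𝔞 := by rw [hexp]; ring
    _ = _ := by rw [hstep]; ring

theorem weight_succ_div (σ : ℝ) (n : ℕ) :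
    weight g σ (n + 1) / weight g σ n = exp σ / 𝔞 / (exp δ ^ (n + 1) - 1) := by
  have hstep := rate_mul_weight_succ (hgpos (n + 1) le_add_self).ne' σ
  have hgn := (hgpos (n + 1) le_add_self).ne'
  rw [hg, mul_comm δ, exp_nat_mul] at hstep hgn
  rw [div_div, div_eq_div_iff (weight_pos hgpos σ n).ne' hgn, ← hstep]
  ring

theorem summable_nat_mul_weight {σ : ℝ} (hq : 0 < 1 + exp σ / 𝔞) :
    Summable fun n : ℕ => (n : ℝ) * weight g σ n := by
  have hpow_succ {x : ℝ} {l : Filter ℝ} (h : Tendsto (fun n : ℕ => x ^ n) atTop l) :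
      Tendsto (fun n : ℕ => x ^ (n + 1)) atTop l :=
    h.comp (tendsto_add_atTop_nat 1)
  have hratio := funext (weight_succ_div hg hgpos σ)
  rcases (ne_zero_of_exponential_rate hg hgpos).2.lt_or_gt with hδ | hδ
  · refine summable_nat_mul_of_ratio_tendsto (l := -(exp σ / 𝔞)) (by linarith)
      (weight_pos hgpos σ) (hratio ▸ ?_)
    have := hpow_succ <|
      tendsto_pow_atTop_nhds_zero_of_lt_one (exp_pos δ).le (exp_lt_one_iff.mpr hδ)
    simpa [div_neg, Pi.div_def] using
      (tendsto_const_nhds (x := exp σ / 𝔞)).div (this.sub_const 1) (by norm_num)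
  · refine summable_nat_mul_of_ratio_tendsto zero_lt_one (weight_pos hgpos σ) (hratio ▸ ?_)
    exact tendsto_const_nhds.div_atTop <| tendsto_atTop_add_const_right _ (-1) <|
      hpow_succ (tendsto_pow_atTop_atTop_of_one_lt (one_lt_exp_iff.mpr hδ))

end ExponentialRate

theorem rankine_hugoniot_single_shock_general
    (𝔞 δ σ θ : ℝ)
    (g : ℕ → ℝ) (hg : ∀ y : ℕ, g y = 𝔞 * (exp (δ * y) - 1))
    (hgpos : ∀ y : ℕ, 1 ≤ y → 0 < g y)
    (hθ : θ = σ + δ)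
    (hZσ : Summable fun z : ℕ => exp (σ * z) / gfact g z) :
    (∑' z : ℕ, (z : ℝ) * muN g σ z) ≠ (∑' z : ℕ, (z : ℝ) * muN g θ z) ∧
    ((∑' z : ℕ, g z * muN g σ z) - ∑' z : ℕ, g z * muN g θ z) /
        ((∑' z : ℕ, (z : ℝ) * muN g σ z) - ∑' z : ℕ, (z : ℝ) * muN g θ z)
      = (exp δ - 1) * (exp σ + 𝔞) := by
  subst hθ
  obtain ⟨h𝔞, -⟩ := ne_zero_of_exponential_rate hg hgpos
  set q := exp σ / 𝔞
  have hrec := weight_add_succ hg hgpos σ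
  have hZ : HasSum (weight g σ) (ZN g σ) := hZσ.hasSum
  have hZ' : HasSum (weight g (σ + δ)) (ZN g σ + q * ZN g σ) :=
    hZ.of_succ_eq_add (hZ.mul_left q) (by simp only [weight_zero]) hrec
  have hZθ : ZN g (σ + δ) = ZN g σ + q * ZN g σ := hZ'.tsum_eq
  have hZσ_pos := ZN_pos hgpos hZσ
  have hq : 0 < 1 + q := by
    have := ZN_pos hgpos hZ'.summable
    nlinarith
  obtain ⟨M, hM⟩ := summable_nat_mul_weight hg hgpos hq
  have hM' : HasSum (fun n : ℕ => (n : ℝ) * weight g (σ + δ) n) (M + q * (M + ZN g σ)) :=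
    hM.of_succ_eq_add ((hM.add hZ).mul_left q) (by simp)
      fun n => by rw [hrec]; push_cast; ring
  have hρ : (∑' z : ℕ, (z : ℝ) * muN g σ z) - ∑' z : ℕ, (z : ℝ) * muN g (σ + δ) z
      = -(q / (1 + q)) := by
    rw [tsum_mul_muN, tsum_mul_muN, hM.tsum_eq, hM'.tsum_eq, hZθ]
    field_simp
    ring
  have hq0 : q ≠ 0 := div_ne_zero (exp_pos σ).ne' h𝔞
  refine ⟨sub_ne_zero.mp (hρ ▸ by simp [hq0, hq.ne']), ?_⟩
  rw [hρ, tsum_rate_mul_muN (by simp [hg]) hgpos hZσ,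
    tsum_rate_mul_muN (by simp [hg]) hgpos hZ'.summable, exp_add]
  simp only [q]
  field_simp
  ring

/-- Rankine–Hugoniot velocity of a single shock: for `g(y) = 𝔞̂·(e^{δy} - 1)` positive on
`{1, 2, ...}` and `θ = σ + δ`, the densities at the two parameters differ and
`(h(σ) - h(θ)) / (ρ(σ) - ρ(θ)) = (e^δ - 1)·(e^σ + 𝔞̂)`. -/
theorem rankine_hugoniot_single_shock
    (𝔞 δ σ θ : ℝ) (hδ : δ ≠ 0)
    (g : ℕ → ℝ) (hg : ∀ y : ℕ, g y = 𝔞 * (exp (δ * y) - 1))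
    (hgpos : ∀ y : ℕ, 1 ≤ y → 0 < g y)
    (hθ : θ = σ + δ)
    (hZσ : Summable fun z : ℕ => exp (σ * z) / gfact g z)
    (hZθ : Summable fun z : ℕ => exp (θ * z) / gfact g z) :
    (∑' z : ℕ, (z : ℝ) * muN g σ z) ≠ (∑' z : ℕ, (z : ℝ) * muN g θ z) ∧
    ((∑' z : ℕ, g z * muN g σ z) - ∑' z : ℕ, g z * muN g θ z) /
        ((∑' z : ℕ, (z : ℝ) * muN g σ z) - ∑' z : ℕ, (z : ℝ) * muN g θ z)
      = (exp δ - 1) * (exp σ + 𝔞) :=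
  rankine_hugoniot_single_shock_general 𝔞 δ σ θ g hg hgpos hθ hZσ
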